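/- Estimate on the Laplacian of the cut-off: for all u ∈ ℓ²(V,μ), ‖u·Δχ_n‖ ≤ β_n‖u‖, where β_n := d_{2n} p_{2n}/(μ_0 n). -/
import Mathlib


open scoped BigOperators

/-- The formal magnetic Laplacian on a weighted graph. -/
noncomputable def magLap {V : Type*} (μ : V → ℝ) (b : V → V → ℝ) (θ : V → V → ℝ)
    (u : V → ℂ) (x : V) : ℂ :=
  (μ x : ℂ)⁻¹ * ∑' y, (b x y : ℂ) * (u x - Complex.exp (Complex.I * (θ x y : ℝ)) * u y)

/-- The term `P_ψ[u]`. -/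
noncomputable def magP {V : Type*} (μ : V → ℝ) (b : V → V → ℝ) (θ : V → V → ℝ)
    (ψ u : V → ℂ) (x : V) : ℂ :=
  (μ x : ℂ)⁻¹ *
    ∑' y, (b x y : ℂ) * (ψ x - ψ y) * (u x - Complex.exp (Complex.I * (θ x y : ℝ)) * u y)

/-- The cut-off function `χ_n`. -/
noncomputable def cutoff {V : Type*} (dist : V → ℕ) (n : ℕ) (x : V) : ℝ :=
  min (max ((2 * (n : ℝ) - (dist x : ℝ)) / (n : ℝ)) 0) 1

/-- Squared norm in `ℓ²(V, μ)`. -/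
noncomputable def wnormSq {V : Type*} (μ : V → ℝ) (f : V → ℂ) : ℝ :=
  ∑' x, μ x * ‖f x‖ ^ 2

/-- Inner product in `ℓ²(V, μ)`. -/
noncomputable def wInner {V : Type*} (μ : V → ℝ) (f g : V → ℂ) : ℂ :=
  ∑' x, (μ x : ℂ) * f x * (starRingEnd ℂ) (g x)

section
variable {V : Type*} [Countable V] (μ : V → ℝ) (μ₀ : ℝ) (b : V → V → ℝ) (θ : V → V → ℝ)
  (G : SimpleGraph V) (x₀ : V) (D P : ℕ → ℝ)

/-- Estimate on the Laplacian of the cut-off: `‖u·Δχ_n‖ ≤ β_n ‖u‖`, with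
`β_n = d_{2n} p_{2n} / (μ₀ n)` and `Δ` the non-magnetic Laplacian. -/
theorem lap_cutoff_estimate
    (hμ0 : 0 < μ₀) (hμ : ∀ x, μ₀ ≤ μ x)
    (hbsymm : ∀ x y, b x y = b y x) (hbnn : ∀ x y, 0 ≤ b x y) (hbdiag : ∀ x, b x x = 0)
    (hloc : ∀ x, {y | 0 < b x y}.Finite)
    (hG : ∀ x y, G.Adj x y ↔ 0 < b x y) (hconn : G.Connected)
    (hθ : ∀ x y, θ x y = -θ y x) (hθbd : ∀ x y, |θ x y| ≤ Real.pi)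
    (hD : ∀ (m : ℕ) (x : V), G.dist x₀ x ≤ m → ({y | 0 < b x y}.ncard : ℝ) ≤ D m)
    (hP : ∀ (m : ℕ) (x y : V), G.dist x₀ x ≤ m → b x y ≤ P m)
    (n : ℕ) (hn : 1 ≤ n)
    (u : V → ℂ) (hu : Summable fun x => μ x * ‖u x‖ ^ 2) :
    Real.sqrt (wnormSq μ (fun x => u x * magLap μ b (fun _ _ => 0)
        (fun z => (cutoff (fun w => G.dist x₀ w) n z : ℂ)) x))
      ≤ (D (2 * n) * P (2 * n) / (μ₀ * n)) * Real.sqrt (wnormSq μ u) := by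
  classical
  set dst : V → ℕ := fun w => G.dist x₀ w with hdst
  set χ : V → ℝ := cutoff dst n with hχdef
  set β : ℝ := D (2 * n) * P (2 * n) / (μ₀ * n) with hβ
  have hn' : (0:ℝ) < n := by exact_mod_cast hn
  have hD0 : (0:ℝ) ≤ D (2 * n) := by
    refine le_trans ?_ (hD (2*n) x₀ (by simp [SimpleGraph.dist_self]))
    positivity
  have hP0 : (0:ℝ) ≤ P (2 * n) := le_trans (hbnn x₀ x₀) (hP (2*n) x₀ x₀ (by simp [SimpleGraph.dist_self]))
  have hβ0 : 0 ≤ β := by positivity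
  -- cutoff vanishes far away
  have hχ0 : ∀ z, 2 * n ≤ dst z → χ z = 0 := by
    intro z hz
    have hz' : (2 * (n:ℝ) - (dst z : ℝ)) / n ≤ 0 := by
      apply div_nonpos_of_nonpos_of_nonneg _ hn'.le
      have : (2 * n : ℝ) ≤ (dst z : ℝ) := by exact_mod_cast hz
      linarith
    simp [hχdef, cutoff, max_eq_right hz', min_eq_left (zero_le_one' ℝ)]
  -- Lipschitz bound on adjacent vertices
  have hlip : ∀ x y : V, G.Adj x y → |χ x - χ y| ≤ 1 / n := by
    intro x y hxy
    have hd1 : G.dist x y = 1 := (SimpleGraph.dist_eq_one_iff_adj).mpr hxy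
    have hd1' : G.dist y x = 1 := (SimpleGraph.dist_eq_one_iff_adj).mpr hxy.symm
    have h1 : (dst x : ℝ) ≤ (dst y : ℝ) + 1 := by
      have := hconn.dist_triangle (u := x₀) (v := y) (w := x)
      rw [hd1'] at this
      exact_mod_cast this
    have h2 : (dst y : ℝ) ≤ (dst x : ℝ) + 1 := by
      have := hconn.dist_triangle (u := x₀) (v := x) (w := y)
      rw [hd1] at this
      exact_mod_cast this
    have habs : |((2 * (n:ℝ) - (dst x : ℝ)) / n) - ((2 * (n:ℝ) - (dst y : ℝ)) / n)| ≤ 1 / n := by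
      rw [div_sub_div_same, abs_div, abs_of_pos hn']
      gcongr
      rw [abs_le]
      constructor <;> linarith
    calc |χ x - χ y| ≤ max |max ((2 * (n:ℝ) - (dst x : ℝ)) / n) 0 - max ((2 * (n:ℝ) - (dst y : ℝ)) / n) 0| |(1:ℝ) - 1| :=
          abs_min_sub_min_le_max _ _ _ _
      _ ≤ max |((2 * (n:ℝ) - (dst x : ℝ)) / n) - ((2 * (n:ℝ) - (dst y : ℝ)) / n)| |(1:ℝ) - 1| := by
          exact max_le_max (abs_max_sub_max_le_abs _ _ _) le_rfl
      _ ≤ 1 / n := by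
          apply max_le habs
          simp [hn'.le]
  -- pointwise bound on the Laplacian
  set L : V → ℂ := magLap μ b (fun _ _ => 0) (fun z => (χ z : ℂ)) with hL
  have key : ∀ x, ‖L x‖ ≤ β := by
    intro x
    have hLx : L x = (μ x : ℂ)⁻¹ * ∑' y, (b x y : ℂ) * ((χ x : ℂ) - (χ y : ℂ)) := by
      simp [hL, magLap]
    set S := (hloc x).toFinset with hS
    have hts : (∑' y, (b x y : ℂ) * ((χ x : ℂ) - (χ y : ℂ)))
        = ∑ y ∈ S, (b x y : ℂ) * ((χ x : ℂ) - (χ y : ℂ)) := by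
      apply tsum_eq_sum
      intro y hy
      have hb : b x y = 0 := by
        by_contra h
        exact hy ((Set.Finite.mem_toFinset _).mpr (lt_of_le_of_ne (hbnn x y) (Ne.symm h)))
      simp [hb]
    have hμx : 0 < μ x := lt_of_lt_of_le hμ0 (hμ x)
    by_cases hx : G.dist x₀ x ≤ 2 * n
    · -- near case
      have hterm : ∀ y ∈ S, ‖(b x y : ℂ) * ((χ x : ℂ) - (χ y : ℂ))‖ ≤ P (2*n) * (1/n) := by
        intro y hy
        have hby : 0 < b x y := (Set.Finite.mem_toFinset (hloc x)).mp hy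
        have hadj : G.Adj x y := (hG x y).mpr hby
        have : ‖(b x y : ℂ) * ((χ x : ℂ) - (χ y : ℂ))‖ = b x y * |χ x - χ y| := by
          rw [norm_mul, ← Complex.ofReal_sub, Complex.norm_real, Complex.norm_real,
            Real.norm_eq_abs, Real.norm_eq_abs, abs_of_pos hby]
        rw [this]
        exact mul_le_mul (hP (2*n) x y hx) (hlip x y hadj) (abs_nonneg _) hP0
      have hcard : (S.card : ℝ) ≤ D (2*n) := by
        have := hD (2*n) x hx
        rwa [Set.ncard_eq_toFinset_card _ (hloc x)] at this
      have hsum : ‖∑ y ∈ S, (b x y : ℂ) * ((χ x : ℂ) - (χ y : ℂ))‖ ≤ D (2*n) * (P (2*n) * (1/n)) := by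
        refine le_trans (norm_sum_le_of_le S hterm) ?_
        rw [Finset.sum_const, nsmul_eq_mul]
        exact mul_le_mul_of_nonneg_right hcard (by positivity)
      rw [hLx, hts, norm_mul]
      have hinv : ‖((μ x : ℝ) : ℂ)⁻¹‖ = (μ x)⁻¹ := by
        rw [norm_inv, Complex.norm_real, Real.norm_eq_abs, abs_of_pos hμx]
      rw [hinv]
      have hinvle : (μ x)⁻¹ ≤ μ₀⁻¹ := inv_anti₀ hμ0 (hμ x)
      calc (μ x)⁻¹ * ‖∑ y ∈ S, (b x y : ℂ) * ((χ x : ℂ) - (χ y : ℂ))‖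
          ≤ μ₀⁻¹ * (D (2*n) * (P (2*n) * (1/n))) := by
            apply mul_le_mul hinvle hsum (norm_nonneg _) (by positivity)
        _ = β := by rw [hβ]; field_simp
    · -- far case: everything vanishes
      have hxlt : 2 * n < dst x := Nat.lt_of_not_le hx
      have hxfar : 2 * n ≤ dst x := hxlt.le
      have hz : ∀ y ∈ S, (b x y : ℂ) * ((χ x : ℂ) - (χ y : ℂ)) = 0 := by
        intro y hy
        have hby : 0 < b x y := (Set.Finite.mem_toFinset (hloc x)).mp hy
        have hadj : G.Adj x y := (hG x y).mpr hby
        have hd1 : G.dist x y = 1 := (SimpleGraph.dist_eq_one_iff_adj).mpr hadj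
        have h2 : dst x ≤ dst y + 1 := by
          have := hconn.dist_triangle (u := x₀) (v := y) (w := x)
          rw [(SimpleGraph.dist_eq_one_iff_adj).mpr hadj.symm] at this
          exact this
        have hyfar : 2 * n ≤ dst y := by omega
        rw [hχ0 x hxfar, hχ0 y hyfar]
        simp
      rw [hLx, hts, Finset.sum_eq_zero hz, mul_zero, norm_zero]
      exact hβ0
  -- assemble
  have hpt : ∀ x, μ x * ‖u x * L x‖ ^ 2 ≤ β ^ 2 * (μ x * ‖u x‖ ^ 2) := by
    intro x
    have hμx : 0 ≤ μ x := le_trans hμ0.le (hμ x)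
    have h1 : ‖u x * L x‖ ≤ ‖u x‖ * β := by
      rw [norm_mul]
      exact mul_le_mul_of_nonneg_left (key x) (norm_nonneg _)
    have h2 : ‖u x * L x‖ ^ 2 ≤ (‖u x‖ * β) ^ 2 :=
      pow_le_pow_left₀ (norm_nonneg _) h1 2
    calc μ x * ‖u x * L x‖ ^ 2 ≤ μ x * (‖u x‖ * β) ^ 2 :=
          mul_le_mul_of_nonneg_left h2 hμx
      _ = β ^ 2 * (μ x * ‖u x‖ ^ 2) := by ring
  have hsum2 : Summable fun x => β ^ 2 * (μ x * ‖u x‖ ^ 2) := hu.mul_left _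
  have hsum1 : Summable fun x => μ x * ‖u x * L x‖ ^ 2 := by
    refine Summable.of_nonneg_of_le (fun x => ?_) hpt hsum2
    exact mul_nonneg (le_trans hμ0.le (hμ x)) (by positivity)
  have hle : wnormSq μ (fun x => u x * L x) ≤ β ^ 2 * wnormSq μ u := by
    rw [wnormSq, wnormSq, ← tsum_mul_left]
    exact Summable.tsum_le_tsum hpt hsum1 hsum2
  calc Real.sqrt (wnormSq μ (fun x => u x * L x))
      ≤ Real.sqrt (β ^ 2 * wnormSq μ u) := Real.sqrt_le_sqrt hle
    _ = β * Real.sqrt (wnormSq μ u) := by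
        rw [Real.sqrt_mul (sq_nonneg β), Real.sqrt_sq hβ0]

end
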